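/- Let L₁ ≥ L₂ ≥ ⋯ ≥ L_m ≥ 0 with total P = Σᵢ Lᵢ, and let 0 ≤ i₀ < m and Q = Σ_{i=1}^{i₀} Lᵢ. Suppose L_{i₀+1} ≤ (3/2)·(P − Q)/(m − i₀). Let T₁ ≥ T₂ ≥ ⋯ ≥ T_m ≥ 0 with Σᵢ Tᵢ = P and Σ_{i=1}^{i₀} Tᵢ ≥ Q, and assume Σ_{i=1}^k Lᵢ ≤ Σ_{i=1}^k Tᵢ for all k ≤ i₀. Then for every k with i₀ < k ≤ m, Σ_{i=1}^k Lᵢ ≤ (3/2)·Σ_{i=1}^k Tᵢ. -/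

import Mathlib

/-!
On the indices `i₀ < i ≤ k` the loads `L` are at most `L_{i₀+1}`, which by hypothesis is at most
`3/2` times the average `(P - Q)/(m - i₀)` of the remaining loads; so with `λ = (k - i₀)/(m - i₀)`,
`Σ_{i≤k} Lᵢ ≤ Q + (3/2) λ (P - Q)`. For the nonincreasing `T`, the segment `i₀ < i ≤ k` carries at
least its proportional share of the tail, so `Σ_{i≤k} Tᵢ ≥ Q̄ + λ (P - Q̄) ≥ Q + λ (P - Q)` with
`Q̄ = Σ_{i≤i₀} Tᵢ ≥ Q`, because `q + λ (P - q)` is nondecreasing in `q` for `λ ≤ 1`. Since `Q ≥ 0`,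
`Q + (3/2) λ (P - Q) ≤ (3/2) (Q + λ (P - Q))`.
-/

open Finset

theorem Finset.sum_Icc_one_add_sum_Ioc {M : Type*} [AddCommMonoid M] (f : ℕ → M) {a b : ℕ}
    (hab : a ≤ b) : ∑ i ∈ Icc 1 a, f i + ∑ i ∈ Ioc a b, f i = ∑ i ∈ Icc 1 b, f i := by
  simpa only [← Icc_add_one_left_eq_Ioc, zero_add] using sum_Ioc_consecutive f (Nat.zero_le a) hab

theorem Finset.sum_Ioc_le_sub_mul {f : ℕ → ℝ} {a b : ℕ} {x : ℝ} (hab : a ≤ b)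
    (h : ∀ i ∈ Ioc a b, f i ≤ x) : ∑ i ∈ Ioc a b, f i ≤ ((b : ℝ) - a) * x := by
  simpa [Nat.cast_sub hab] using sum_le_card_nsmul (Ioc a b) f x h

theorem Finset.sub_mul_le_sum_Ioc {f : ℕ → ℝ} {a b : ℕ} {x : ℝ} (hab : a ≤ b)
    (h : ∀ i ∈ Ioc a b, x ≤ f i) : ((b : ℝ) - a) * x ≤ ∑ i ∈ Ioc a b, f i := by
  simpa [Nat.cast_sub hab] using card_nsmul_le_sum (Ioc a b) f x h

theorem AntitoneOn.sum_Icc_one_le_add_sub_mul {f : ℕ → ℝ} {a k : ℕ}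
    (hf : AntitoneOn f (Set.Ioc a k)) (hak : a ≤ k) :
    ∑ i ∈ Icc 1 k, f i ≤ ∑ i ∈ Icc 1 a, f i + ((k : ℝ) - a) * f (a + 1) := by
  rw [← sum_Icc_one_add_sum_Ioc f hak, add_le_add_iff_left]
  refine sum_Ioc_le_sub_mul hak fun i hi ↦ ?_
  simp only [mem_Ioc] at hi
  exact hf ⟨Nat.lt_succ_self a, by omega⟩ ⟨hi.1, hi.2⟩ hi.1

/-- The average of a nonincreasing sequence over an initial segment of `(a, b]` is at least its
average over all of `(a, b]`. -/
theorem AntitoneOn.sub_mul_sum_Ioc_le_sub_mul_sum_Ioc {f : ℕ → ℝ} {a k b : ℕ}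
    (hf : AntitoneOn f (Set.Ioc a b)) (hak : a < k) (hkb : k ≤ b) :
    ((k : ℝ) - a) * ∑ i ∈ Ioc a b, f i ≤ ((b : ℝ) - a) * ∑ i ∈ Ioc a k, f i := by
  have hk : k ∈ Set.Ioc a b := ⟨hak, hkb⟩
  have hhead : ((k : ℝ) - a) * f k ≤ ∑ i ∈ Ioc a k, f i :=
    sub_mul_le_sum_Ioc hak.le fun i hi ↦ by
      simp only [mem_Ioc] at hi
      exact hf ⟨hi.1, hi.2.trans hkb⟩ hk hi.2
  have htail : ∑ i ∈ Ioc k b, f i ≤ ((b : ℝ) - k) * f k :=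
    sum_Ioc_le_sub_mul hkb fun i hi ↦ by
      simp only [mem_Ioc] at hi
      exact hf hk ⟨hak.trans hi.1, hi.2⟩ hi.1.le
  have hak' : (a : ℝ) ≤ k := by exact_mod_cast hak.le
  have hkb' : (k : ℝ) ≤ b := by exact_mod_cast hkb
  rw [← sum_Ioc_consecutive f hak.le hkb]
  nlinarith [mul_le_mul_of_nonneg_left hhead (sub_nonneg.2 hkb'),
    mul_le_mul_of_nonneg_left htail (sub_nonneg.2 hak')]

theorem AntitoneOn.add_div_mul_sub_le_sum_Icc_one {f : ℕ → ℝ} {a k b : ℕ}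
    (hf : AntitoneOn f (Set.Ioc a b)) (hak : a < k) (hkb : k ≤ b) :
    ∑ i ∈ Icc 1 a, f i + ((k : ℝ) - a) / ((b : ℝ) - a) * (∑ i ∈ Icc 1 b, f i - ∑ i ∈ Icc 1 a, f i)
      ≤ ∑ i ∈ Icc 1 k, f i := by
  have hab : (0 : ℝ) < (b : ℝ) - a := sub_pos.2 (by exact_mod_cast hak.trans_le hkb)
  have hshare := hf.sub_mul_sum_Ioc_le_sub_mul_sum_Ioc hak hkb
  rw [← sum_Icc_one_add_sum_Ioc f (hak.trans_le hkb).le, ← sum_Icc_one_add_sum_Ioc f hak.le,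
    add_sub_cancel_left, add_le_add_iff_left, div_mul_eq_mul_div, div_le_iff₀ hab]
  linarith

theorem add_mul_sub_le_add_mul_sub {q q' t P : ℝ} (ht : t ≤ 1) (hq : q ≤ q') :
    q + t * (P - q) ≤ q' + t * (P - q') := by
  nlinarith [mul_nonneg (sub_nonneg.2 ht) (sub_nonneg.2 hq)]

theorem lpt_three_halves_general (m i₀ : ℕ) (L T : ℕ → ℝ)
    (hL : ∀ i j, 1 ≤ i → i ≤ j → j ≤ m → L j ≤ L i)
    (hL0 : ∀ i, 1 ≤ i → i ≤ m → 0 ≤ L i)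
    (hT : ∀ i j, 1 ≤ i → i ≤ j → j ≤ m → T j ≤ T i)
    (htot : ∑ i ∈ Finset.Icc 1 m, T i = ∑ i ∈ Finset.Icc 1 m, L i)
    (hQ : ∑ i ∈ Finset.Icc 1 i₀, L i ≤ ∑ i ∈ Finset.Icc 1 i₀, T i)
    (hnext : L (i₀ + 1) ≤ (3 / 2) *
      ((∑ i ∈ Finset.Icc 1 m, L i - ∑ i ∈ Finset.Icc 1 i₀, L i) / ((m : ℝ) - i₀))) :
    ∀ k, i₀ < k → k ≤ m →
      ∑ i ∈ Finset.Icc 1 k, L i ≤ (3 / 2) * ∑ i ∈ Finset.Icc 1 k, T i := by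
  intro k hik hkm
  set P := ∑ i ∈ Icc 1 m, L i
  set Q := ∑ i ∈ Icc 1 i₀, L i
  have hik' : (i₀ : ℝ) < k := by exact_mod_cast hik
  have hkm' : (k : ℝ) ≤ m := by exact_mod_cast hkm
  set t := ((k : ℝ) - i₀) / ((m : ℝ) - i₀)
  have ht : t ≤ 1 := div_le_one_of_le₀ (by linarith) (by linarith)
  have hQ0 : 0 ≤ Q := sum_nonneg fun i hi ↦ by
    simp only [mem_Icc] at hi
    exact hL0 i hi.1 (by omega)
  have hLsum : ∑ i ∈ Icc 1 k, L i ≤ Q + ((k : ℝ) - i₀) * L (i₀ + 1) :=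
    AntitoneOn.sum_Icc_one_le_add_sub_mul
      (fun i hi j hj hij ↦ hL i j (Nat.one_le_of_lt hi.1) hij (hj.2.trans hkm)) hik.le
  have hTsum := AntitoneOn.add_div_mul_sub_le_sum_Icc_one
    (fun i hi j hj hij ↦ hT i j (Nat.one_le_of_lt hi.1) hij hj.2 : AntitoneOn T (Set.Ioc i₀ m))
    hik hkm
  rw [htot] at hTsum
  calc ∑ i ∈ Icc 1 k, L i ≤ Q + ((k : ℝ) - i₀) * L (i₀ + 1) := hLsum
    _ ≤ Q + ((k : ℝ) - i₀) * (3 / 2 * ((P - Q) / ((m : ℝ) - i₀))) := by gcongr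
    _ = Q + 3 / 2 * t * (P - Q) := by ring
    _ ≤ 3 / 2 * (Q + t * (P - Q)) := by linarith
    _ ≤ 3 / 2 * (∑ i ∈ Icc 1 i₀, T i + t * (P - ∑ i ∈ Icc 1 i₀, T i)) := by
      gcongr ?_ * ?_; exact add_mul_sub_le_add_mul_sub ht hQ
    _ ≤ 3 / 2 * ∑ i ∈ Icc 1 k, T i := by gcongr

/-- Final step of `WAR(Pm(NP)) ≤ 3/2`: if `L₁ ≥ ⋯ ≥ L_m ≥ 0` with total `P`,
`Q = Σ_{i≤i₀} Lᵢ`, and `L_{i₀+1} ≤ (3/2)(P − Q)/(m − i₀)`, then for any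
nonincreasing nonnegative `T` with total `P`, `Σ_{i≤i₀} Tᵢ ≥ Q`, and
`Σ_{i≤k} Lᵢ ≤ Σ_{i≤k} Tᵢ` for `k ≤ i₀`, we have
`Σ_{i≤k} Lᵢ ≤ (3/2) Σ_{i≤k} Tᵢ` for every `i₀ < k ≤ m`. -/
theorem lpt_three_halves (m i₀ : ℕ) (L T : ℕ → ℝ)
    (hi₀ : i₀ < m)
    (hL : ∀ i j, 1 ≤ i → i ≤ j → j ≤ m → L j ≤ L i)
    (hL0 : ∀ i, 1 ≤ i → i ≤ m → 0 ≤ L i)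
    (hT : ∀ i j, 1 ≤ i → i ≤ j → j ≤ m → T j ≤ T i)
    (hT0 : ∀ i, 1 ≤ i → i ≤ m → 0 ≤ T i)
    (htot : ∑ i ∈ Finset.Icc 1 m, T i = ∑ i ∈ Finset.Icc 1 m, L i)
    (hQ : ∑ i ∈ Finset.Icc 1 i₀, L i ≤ ∑ i ∈ Finset.Icc 1 i₀, T i)
    (hLk : ∀ k, k ≤ i₀ → ∑ i ∈ Finset.Icc 1 k, L i ≤ ∑ i ∈ Finset.Icc 1 k, T i)
    (hnext : L (i₀ + 1) ≤ (3 / 2) *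
      ((∑ i ∈ Finset.Icc 1 m, L i - ∑ i ∈ Finset.Icc 1 i₀, L i) / ((m : ℝ) - i₀))) :
    ∀ k, i₀ < k → k ≤ m →
      ∑ i ∈ Finset.Icc 1 k, L i ≤ (3 / 2) * ∑ i ∈ Finset.Icc 1 k, T i :=
  lpt_three_halves_general m i₀ L T hL hL0 hT htot hQ hnext
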